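/- For all ω > 0, η > 0 and every positive integer k, the k-th raw moment of the Shiha distribution satisfies ∫₀^∞ y^k f(y; ω, η) dy = (2^k ω + 2ηk + 3η) · k! / (2^k ω^k (ω + 3η)). -/

import Mathlib

open Real MeasureTheory

noncomputable def shihaPdf (ω η y : ℝ) : ℝ :=
  ω / (ω + 3 * η) * (ω + (2 * η + 8 * ω * η * y) * Real.exp (-ω * y)) * Real.exp (-ω * y)

/-!
Expanding the bracket writes the Shiha density as a mixture of three Gamma kernels,
`ω / (ω + 3η) · (ω e^{-ωy} + 2η e^{-2ωy} + 8ωη y e^{-2ωy})`, so the `k`-th moment is a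
combination of the Gamma integrals `∫₀^∞ yⁿ e^{-ay} dy = n! / a^{n+1}` with `n ∈ {k, k + 1}`
and `a ∈ {ω, 2ω}`.
-/

open scoped Nat

theorem integrableOn_pow_mul_exp_neg_mul_Ioi {a : ℝ} (ha : 0 < a) (n : ℕ) :
    IntegrableOn (fun y : ℝ ↦ y ^ n * exp (-(a * y))) (Set.Ioi 0) := by
  refine (integrableOn_rpow_mul_exp_neg_mul_rpow (p := 1) (s := n)
    (neg_one_lt_zero.trans_le n.cast_nonneg) one_pos ha).congr_fun (fun y _ ↦ ?_) measurableSet_Ioi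
  simp only [rpow_natCast, rpow_one, neg_mul]

theorem integral_pow_mul_exp_neg_mul_Ioi {a : ℝ} (ha : 0 < a) (n : ℕ) :
    ∫ y in Set.Ioi (0 : ℝ), y ^ n * exp (-(a * y)) = n ! / a ^ (n + 1) := by
  have hGamma := integral_rpow_mul_exp_neg_mul_Ioi (a := n + 1) (by positivity) ha
  simp only [add_sub_cancel_right, rpow_natCast, Gamma_nat_eq_factorial] at hGamma
  rw [hGamma]
  norm_cast
  rw [one_div, inv_pow, inv_mul_eq_div]

theorem pow_mul_shihaPdf (ω η y : ℝ) (k : ℕ) :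
    y ^ k * shihaPdf ω η y = ω / (ω + 3 * η) *
      (ω * (y ^ k * exp (-(ω * y))) + 2 * η * (y ^ k * exp (-(2 * ω * y)))
        + 8 * ω * η * (y ^ (k + 1) * exp (-(2 * ω * y)))) := by
  have hexp : exp (-(2 * ω * y)) = exp (-ω * y) * exp (-ω * y) := by
    rw [← exp_add]; ring_nf
  rw [shihaPdf, hexp, neg_mul]
  ring

theorem integral_pow_mul_shihaPdf {ω : ℝ} (hω : 0 < ω) (η : ℝ) (k : ℕ) :
    ∫ y in Set.Ioi (0 : ℝ), y ^ k * shihaPdf ω η y = ω / (ω + 3 * η) *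
      (ω * (k ! / ω ^ (k + 1)) + 2 * η * (k ! / (2 * ω) ^ (k + 1))
        + 8 * ω * η * ((k + 1)! / (2 * ω) ^ (k + 2))) := by
  have h2ω : 0 < 2 * ω := by positivity
  have i1 := (integrableOn_pow_mul_exp_neg_mul_Ioi hω k).const_mul ω
  have i2 := (integrableOn_pow_mul_exp_neg_mul_Ioi h2ω k).const_mul (2 * η)
  have i3 := (integrableOn_pow_mul_exp_neg_mul_Ioi h2ω (k + 1)).const_mul (8 * ω * η)
  simp_rw [pow_mul_shihaPdf]
  rw [integral_const_mul, integral_add ?_ i3, integral_add i1 i2,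
    integral_const_mul, integral_const_mul, integral_const_mul,
    integral_pow_mul_exp_neg_mul_Ioi hω, integral_pow_mul_exp_neg_mul_Ioi h2ω,
    integral_pow_mul_exp_neg_mul_Ioi h2ω]
  exact i1.add i2

theorem shiha_raw_moments_general (ω η : ℝ) (hω : 0 < ω) (hη : 0 < η) (k : ℕ) :
    (∫ y in Set.Ioi (0 : ℝ), y ^ k * shihaPdf ω η y)
      = (2 ^ k * ω + 2 * η * k + 3 * η) * (Nat.factorial k)
        / (2 ^ k * ω ^ k * (ω + 3 * η)) := by
  have hsum : ω + 3 * η ≠ 0 := by positivity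
  rw [integral_pow_mul_shihaPdf hω, Nat.factorial_succ, Nat.cast_mul, mul_pow, mul_pow]
  field_simp
  push_cast
  ring

theorem shiha_raw_moments (ω η : ℝ) (hω : 0 < ω) (hη : 0 < η) (k : ℕ) (hk : 0 < k) :
    (∫ y in Set.Ioi (0 : ℝ), y ^ k * shihaPdf ω η y)
      = (2 ^ k * ω + 2 * η * k + 3 * η) * (Nat.factorial k)
        / (2 ^ k * ω ^ k * (ω + 3 * η)) :=
  shiha_raw_moments_general ω η hω hη k
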